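/- Let K_n be the n×n tridiagonal matrix with main diagonal entries (1, 3, 1, 1, ..., 1), subdiagonal entries all 1, and superdiagonal entries all 2. Then for n ≥ 2, the permanent of K_n equals j_n, the n-th Jacobsthal-Lucas number. -/
import Mathlib


def jacobsthalLucas : ℕ → ℤ
  | 0 => 2
  | 1 => 1
  | n + 2 => jacobsthalLucas (n + 1) + 2 * jacobsthalLucas n

def permanent {n : ℕ} (A : Matrix (Fin n) (Fin n) ℤ) : ℤ :=
  ∑ σ : Equiv.Perm (Fin n), ∏ i, A i (σ i)

def Kmat (n : ℕ) : Matrix (Fin n) (Fin n) ℤ :=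
  Matrix.of fun i j =>
    if (i : ℕ) = (j : ℕ) then (if (i : ℕ) = 1 then 3 else 1)
    else if (i : ℕ) = (j : ℕ) + 1 then 1
    else if (j : ℕ) = (i : ℕ) + 1 then 2
    else 0

/-! ### Auxiliary lemmas -/

open scoped Matrix

lemma permanent_succ_row_zero {n : ℕ} (A : Matrix (Fin (n+1)) (Fin (n+1)) ℤ) :
    permanent A = ∑ j : Fin (n+1), A 0 j * permanent (A.submatrix Fin.succ j.succAbove) := by
  rw [permanent, Finset.univ_perm_fin_succ, ← Finset.univ_product_univ, Finset.sum_map]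
  simp only [Equiv.toEmbedding_apply, Finset.sum_product]
  refine Finset.sum_congr rfl fun p _ => Fin.cases ?_ (fun i => ?_) p
  · simp only [Fin.prod_univ_succ, Equiv.Perm.decomposeFin_symm_apply_zero,
      Equiv.Perm.decomposeFin_symm_apply_succ, Equiv.swap_self, Equiv.coe_refl, id_eq,
      Fin.succAbove_zero, permanent, Finset.mul_sum, Matrix.submatrix_apply]
  · rw [permanent, Finset.mul_sum]
    refine Fintype.sum_bijective (fun σ => Fin.cycleRange i * σ)
      (Group.mulLeft_bijective _) _ _ fun σ => ?_
    rw [Fin.prod_univ_succ]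
    simp only [Equiv.Perm.decomposeFin_symm_apply_zero, Equiv.Perm.decomposeFin_symm_apply_succ,
      Equiv.Perm.coe_mul, Function.comp_apply, Fin.succAbove_cycleRange, Matrix.submatrix_apply]

lemma permanent_transpose' {n : ℕ} (A : Matrix (Fin n) (Fin n) ℤ) :
    permanent Aᵀ = permanent A := by
  rw [permanent, permanent]
  refine Fintype.sum_bijective (fun σ => σ⁻¹) (Equiv.inv (Equiv.Perm (Fin n))).bijective _ _
    fun σ => ?_
  rw [← Equiv.prod_comp σ fun j => A j (σ⁻¹ j)]
  simp [Matrix.transpose_apply]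

lemma permanent_succ_column_zero {n : ℕ} (A : Matrix (Fin (n+1)) (Fin (n+1)) ℤ) :
    permanent A = ∑ i : Fin (n+1), A i 0 * permanent (A.submatrix i.succAbove Fin.succ) := by
  rw [← permanent_transpose' A, permanent_succ_row_zero]
  refine Finset.sum_congr rfl fun i _ => ?_
  rw [← permanent_transpose' (A.submatrix i.succAbove Fin.succ)]
  simp [Matrix.transpose_submatrix]

/-- The general tridiagonal family: diagonal `(a, b, 1, 1, …)`, subdiagonal `1`,
superdiagonal `2`. -/
def Tmat (a b : ℤ) (n : ℕ) : Matrix (Fin n) (Fin n) ℤ :=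
  Matrix.of fun i j =>
    if (i : ℕ) = (j : ℕ) then (if (i : ℕ) = 0 then a else if (i : ℕ) = 1 then b else 1)
    else if (i : ℕ) = (j : ℕ) + 1 then 1
    else if (j : ℕ) = (i : ℕ) + 1 then 2
    else 0

lemma permanent_fin_zero (A : Matrix (Fin 0) (Fin 0) ℤ) : permanent A = 1 := by
  simp [permanent]

lemma permanent_fin_one (A : Matrix (Fin 1) (Fin 1) ℤ) : permanent A = A 0 0 := by
  simp [permanent, Finset.univ_unique]

lemma succAbove_one_zero {n : ℕ} : ((1 : Fin (n+2)).succAbove (0 : Fin (n+1))) = 0 := by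
  rw [← Fin.succ_zero_eq_one, Fin.succ_succAbove_zero]

lemma succAbove_one_succ {n : ℕ} (j : Fin n) :
    ((1 : Fin (n+2)).succAbove j.succ) = j.succ.succ := by
  rw [← Fin.succ_zero_eq_one, Fin.succ_succAbove_succ, Fin.succAbove_zero]

lemma perm_T (a b : ℤ) (n : ℕ) :
    permanent (Tmat a b (n+2)) =
      a * permanent (Tmat b 1 (n+1)) + 2 * permanent (Tmat 1 1 n) := by
  rw [permanent_succ_row_zero, Fin.sum_univ_succ, Fin.sum_univ_succ]
  have h0 : ∀ j : Fin n, Tmat a b (n+2) 0 (j.succ.succ) = 0 := by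
    intro j
    simp only [Tmat, Matrix.of_apply, Fin.val_succ, Fin.val_zero]
    split_ifs <;> first | omega | (exfalso; assumption)
  have e00 : Tmat a b (n+2) 0 0 = a := by simp [Tmat]
  have e01 : Tmat a b (n+2) 0 1 = 2 := by
    simp only [Tmat, Matrix.of_apply, Fin.val_zero, Fin.val_one]
    norm_num
  have hA : (Tmat a b (n+2)).submatrix Fin.succ ((0 : Fin (n+2)).succAbove) = Tmat b 1 (n+1) := by
    ext i j
    simp only [Matrix.submatrix_apply, Fin.succAbove_zero, Tmat, Matrix.of_apply, Fin.val_succ]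
    split_ifs <;> first | omega | (exfalso; assumption)
  have hB : permanent ((Tmat a b (n+2)).submatrix Fin.succ ((1 : Fin (n+2)).succAbove)) =
      permanent (Tmat 1 1 n) := by
    rw [permanent_succ_column_zero, Fin.sum_univ_succ]
    have t0 : ∀ i : Fin n,
        (Tmat a b (n+2)).submatrix Fin.succ ((1 : Fin (n+2)).succAbove) i.succ 0 = 0 := by
      intro i
      simp only [Matrix.submatrix_apply, succAbove_one_zero, Tmat, Matrix.of_apply,
        Fin.val_succ, Fin.val_zero]
      split_ifs <;> first | omega | (exfalso; assumption)
    have t1 : (Tmat a b (n+2)).submatrix Fin.succ ((1 : Fin (n+2)).succAbove) 0 0 = 1 := by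
      simp only [Matrix.submatrix_apply, succAbove_one_zero, Tmat, Matrix.of_apply,
        Fin.val_succ, Fin.val_zero]
      norm_num
    have t2 : ((Tmat a b (n+2)).submatrix Fin.succ ((1 : Fin (n+2)).succAbove)).submatrix
        ((0 : Fin (n+1)).succAbove) Fin.succ = Tmat 1 1 n := by
      ext i j
      simp only [Matrix.submatrix_apply, Fin.succAbove_zero, succAbove_one_succ, Tmat,
        Matrix.of_apply, Fin.val_succ]
      split_ifs <;> first | omega | (exfalso; assumption)
    simp only [t0, zero_mul, Finset.sum_const_zero, add_zero, t1, t2, one_mul]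
  simp only [Fin.succ_zero_eq_one, h0, zero_mul, Finset.sum_const_zero, add_zero]
  rw [hA, hB, e00, e01]

/-- The Jacobsthal numbers (shifted): `1, 1, 3, 5, 11, 21, …`. -/
def Jseq : ℕ → ℤ
  | 0 => 1
  | 1 => 1
  | n + 2 => Jseq (n + 1) + 2 * Jseq n

lemma Kmat_eq (n : ℕ) : Kmat n = Tmat 1 3 n := by
  ext i j
  simp only [Kmat, Tmat, Matrix.of_apply]
  split_ifs <;> first | omega | (exfalso; assumption)

lemma perm_T11 (n : ℕ) : permanent (Tmat 1 1 n) = Jseq n := by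
  have key : ∀ m, permanent (Tmat 1 1 m) = Jseq m ∧
      permanent (Tmat 1 1 (m+1)) = Jseq (m+1) := by
    intro m
    induction m with
    | zero =>
      refine ⟨permanent_fin_zero _, ?_⟩
      rw [permanent_fin_one]
      simp [Tmat, Jseq]
    | succ k ih =>
      refine ⟨ih.2, ?_⟩
      rw [show k + 1 + 1 = k + 2 from rfl, perm_T, ih.1, ih.2]
      show (1 : ℤ) * Jseq (k+1) + 2 * Jseq k = Jseq (k+2)
      rw [Jseq]; ring
  exact (key n).1

lemma perm_T31 (n : ℕ) : permanent (Tmat 3 1 (n+2)) = 3 * Jseq (n+1) + 2 * Jseq n := by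
  rw [perm_T, perm_T11, perm_T11]

lemma jl_eq (m : ℕ) : jacobsthalLucas (m+3) = 5 * Jseq (m+1) + 2 * Jseq m := by
  have key : ∀ k, jacobsthalLucas (k+3) = 5 * Jseq (k+1) + 2 * Jseq k ∧
      jacobsthalLucas (k+4) = 5 * Jseq (k+2) + 2 * Jseq (k+1) := by
    intro k
    induction k with
    | zero => constructor <;> norm_num [jacobsthalLucas, Jseq]
    | succ k ih =>
      refine ⟨ih.2, ?_⟩
      show jacobsthalLucas (k+3+2) = _
      have h3 : Jseq (k+3) = Jseq (k+2) + 2 * Jseq (k+1) := rfl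
      have h2 : Jseq (k+2) = Jseq (k+1) + 2 * Jseq k := rfl
      rw [jacobsthalLucas, ih.1, ih.2, h3, h2]
      ring
  exact (key m).1

theorem permanent_Kmat (n : ℕ) (hn : 2 ≤ n) :
    permanent (Kmat n) = jacobsthalLucas n := by
  rw [Kmat_eq]
  match n, hn with
  | 2, _ =>
    rw [show (2:ℕ) = 0 + 2 from rfl, perm_T, permanent_fin_zero, permanent_fin_one]
    norm_num [Tmat, jacobsthalLucas]
  | (m+3), _ =>
    rw [show m + 3 = (m+1) + 2 from rfl, perm_T, perm_T31, perm_T11, jl_eq]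
    ring
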